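/- Let K be a field equipped with a set V^K of discrete valuations satisfying condition (A), let L/K be a cyclic Galois extension of degree n, and let V^L be the set of all extensions of places from V^K to L. If Pic(L, V^L) and U(K, V^K) are finitely generated, then the unramified relative Brauer group Br(L/K)_{V^K} is finite. -/

import Mathlib

/-- A (normalized, surjective) discrete valuation on a field `K`. -/
structure DVal (K : Type) [Field K] where
  toFun : K → ℤ
  map_one : toFun 1 = 0
  map_mul : ∀ x y : K, x ≠ 0 → y ≠ 0 → toFun (x * y) = toFun x + toFun y
  surj : ∀ n : ℤ, ∃ x : K, x ≠ 0 ∧ toFun x = n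
  min_le : ∀ x y : K, x ≠ 0 → y ≠ 0 → x + y ≠ 0 → min (toFun x) (toFun y) ≤ toFun (x + y)

variable {K : Type} [Field K]

/-- The group of units `U(K, W)` as a subgroup of `Kˣ`. -/
def unitGroup (W : Set (DVal K)) : Subgroup Kˣ where
  carrier := {a : Kˣ | ∀ v ∈ W, v.toFun (a : K) = 0}
  one_mem' := by intro v _; simpa using v.map_one
  mul_mem' := by
    intro a b ha hb v hv
    have h := v.map_mul (a : K) (b : K) (Units.ne_zero a) (Units.ne_zero b)
    rw [Units.val_mul, h, ha v hv, hb v hv]; ring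
  inv_mem' := by
    intro a ha v hv
    have h := v.map_mul (a : K) ((a⁻¹ : Kˣ) : K) (Units.ne_zero a) (Units.ne_zero _)
    have h1 : ((a : K) * ((a⁻¹ : Kˣ) : K)) = 1 := by rw [← Units.val_mul]; simp
    rw [h1, v.map_one, ha v hv] at h
    omega

/-- A divisor supported on a set `W` of discrete valuations. -/
def IsDivisor {F : Type} [Field F] (W : Set (DVal F)) (d : DVal F → ℤ) : Prop :=
  {v | v ∈ W ∧ d v ≠ 0}.Finite

/-- `Pic(F, W)` is finitely generated. -/
def PicFG {F : Type} [Field F] (W : Set (DVal F)) : Prop :=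
  ∃ (r : ℕ) (D : Fin r → (DVal F → ℤ)), (∀ i, IsDivisor W (D i)) ∧
    ∀ d : DVal F → ℤ, IsDivisor W d →
      ∃ (n : Fin r → ℤ) (a : F), a ≠ 0 ∧
        ∀ v ∈ W, d v = (∑ i, n i * D i v) + v.toFun a

/-- `w` extends `v` to `L` (with some ramification index `e ≥ 1`). -/
def ExtendsDV {L : Type} [Field L] [Algebra K L] (w : DVal L) (v : DVal K) : Prop :=
  ∃ e : ℕ, 0 < e ∧ ∀ a : K, a ≠ 0 → w.toFun (algebraMap K L a) = e * v.toFun a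

/-- `w` extends `v` unramified: `w|_K = v`. -/
def UnramExtends {L : Type} [Field L] [Algebra K L] (w : DVal L) (v : DVal K) : Prop :=
  ∀ a : K, a ≠ 0 → w.toFun (algebraMap K L a) = v.toFun a

/-- The order `n_v` of the decomposition group of `w`. -/
noncomputable def decompCard {L : Type} [Field L] [Algebra K L] (w : DVal L) : ℕ :=
  Nat.card {θ : L ≃ₐ[K] L // ∀ x : L, x ≠ 0 → w.toFun (θ x) = w.toFun x}


/-! ### Auxiliary lemmas -/

theorem DVal.ext' {F : Type} [Field F] {w w' : DVal F} (h : w.toFun = w'.toFun) : w = w' := by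
  cases w; cases w'; cases h; rfl

theorem DVal.map_inv' {F : Type} [Field F] (v : DVal F) (x : F) (hx : x ≠ 0) :
    v.toFun x⁻¹ = - v.toFun x := by
  have h := v.map_mul x x⁻¹ hx (inv_ne_zero hx)
  rw [mul_inv_cancel₀ hx, v.map_one] at h; omega

theorem DVal.map_prod' {F : Type} {ι : Type*} [Field F] (v : DVal F) (s : Finset ι) (f : ι → F)
    (hf : ∀ i ∈ s, f i ≠ 0) : v.toFun (∏ i ∈ s, f i) = ∑ i ∈ s, v.toFun (f i) := by
  classical
  induction s using Finset.induction_on with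
  | empty => simpa using v.map_one
  | @insert j s hj ih =>
    rw [Finset.prod_insert hj, Finset.sum_insert hj,
      v.map_mul _ _ (hf j (Finset.mem_insert_self j s))
        (Finset.prod_ne_zero_iff.mpr fun i hi => hf i (Finset.mem_insert_of_mem hi)),
      ih fun i hi => hf i (Finset.mem_insert_of_mem hi)]

/-- Precomposition of a valuation with a field automorphism. -/
def DVal.galComp {K L : Type} [Field K] [Field L] [Algebra K L] (w : DVal L)
    (τ : L ≃ₐ[K] L) : DVal L where
  toFun := fun x => w.toFun (τ x)
  map_one := by simpa using w.map_one
  map_mul := fun x y hx hy => by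
    have hx' : τ x ≠ 0 := fun h => hx (by simpa using congrArg τ.symm h)
    have hy' : τ y ≠ 0 := fun h => hy (by simpa using congrArg τ.symm h)
    simpa using w.map_mul (τ x) (τ y) hx' hy'
  surj := fun m => by
    obtain ⟨x, hx, hxm⟩ := w.surj m
    refine ⟨τ.symm x, fun h => hx ?_, by simpa using hxm⟩
    simpa using congrArg τ h
  min_le := fun x y hx hy hxy => by
    have hx' : τ x ≠ 0 := fun h => hx (by simpa using congrArg τ.symm h)
    have hy' : τ y ≠ 0 := fun h => hy (by simpa using congrArg τ.symm h)
    have hxy' : τ x + τ y ≠ 0 := by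
      rw [← map_add]; exact fun h => hxy (by simpa using congrArg τ.symm h)
    have := w.min_le (τ x) (τ y) hx' hy' hxy'
    simpa [map_add] using this

theorem galComp_toFun {K L : Type} [Field K] [Field L] [Algebra K L] (w : DVal L)
    (τ : L ≃ₐ[K] L) (x : L) : (w.galComp τ).toFun x = w.toFun (τ x) := rfl

theorem UnramExtends.extendsDV {K : Type} [Field K] {L : Type} [Field L] [Algebra K L]
    {w : DVal L} {v : DVal K} (h : UnramExtends w v) : ExtendsDV w v :=
  ⟨1, Nat.one_pos, fun a ha => by rw [h a ha]; push_cast; ring⟩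

theorem ExtendsDV.galComp {K : Type} [Field K] {L : Type} [Field L] [Algebra K L]
    {w : DVal L} {v : DVal K} (h : ExtendsDV w v) (τ : L ≃ₐ[K] L) :
    ExtendsDV (w.galComp τ) v := by
  obtain ⟨e, he, h⟩ := h
  exact ⟨e, he, fun a ha => by rw [galComp_toFun, τ.commutes, h a ha]⟩

theorem UnramExtends.galComp {K : Type} [Field K] {L : Type} [Field L] [Algebra K L]
    {w : DVal L} {v : DVal K} (h : UnramExtends w v) (τ : L ≃ₐ[K] L) :
    UnramExtends (w.galComp τ) v := fun a ha => by rw [galComp_toFun, τ.commutes, h a ha]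

/-- The subgroup of units with zero valuation at every valuation satisfying `p`. -/
def zeroValSubgroup {K : Type} [Field K] (p : DVal K → Prop) : Subgroup Kˣ where
  carrier := {a : Kˣ | ∀ v, p v → v.toFun (a : K) = 0}
  one_mem' := by intro v _; simpa using v.map_one
  mul_mem' := by
    intro a b ha hb v hv
    have h := v.map_mul (a : K) (b : K) (Units.ne_zero a) (Units.ne_zero b)
    rw [Units.val_mul, h, ha v hv, hb v hv]; ring
  inv_mem' := by
    intro a ha v hv
    have h := v.map_mul (a : K) ((a⁻¹ : Kˣ) : K) (Units.ne_zero a) (Units.ne_zero _)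
    have h1 : ((a : K) * ((a⁻¹ : Kˣ) : K)) = 1 := by rw [← Units.val_mul]; simp
    rw [h1, v.map_one, ha v hv] at h
    omega

/-- for a cyclic extension `L/K` of degree `n`, with `V^K` satisfying (A),
if `Pic(L, V^L)` and `U(K, V^K)` are finitely generated, then the unramified relative
Brauer group `Br(L/K)_{V^K}` is finite.  Here `Br(L/K)` is identified (via the choice of a
generator `σ` of `Gal(L/K)` and cyclic algebras `(L, σ, c)`) with `K^×/N_{L/K}(L^×)`, and a
class is unramified at `v ∈ V^K` precisely when it has a representative `c` whose valuation
`v(c)` is divisible by the local degree `n_v` at every place of `V^K` that is unramified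
in `L` (the residue-map criterion of Lemma 2.4). -/
theorem relative_brauer_finite_cyclic (L : Type) [Field L] [Algebra K L]
    [FiniteDimensional K L] [IsGalois K L]
    (n : ℕ) (hn : Module.finrank K L = n)
    (σ : L ≃ₐ[K] L) (hσ : ∀ τ : L ≃ₐ[K] L, τ ∈ Subgroup.zpowers σ)
    (VK : Set (DVal K))
    (hA : ∀ a : K, a ≠ 0 → {v | v ∈ VK ∧ v.toFun a ≠ 0}.Finite)
    -- all but finitely many places of `V^K` are unramified in `L`
    (hram : {v | v ∈ VK ∧ ¬∃ w : DVal L, UnramExtends (K := K) w v}.Finite)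
    -- every place of `V^K` admits an extension to `L`
    (hext : ∀ v ∈ VK, ∃ w : DVal L, ExtendsDV w v)
    -- `Pic(L, V^L)` is finitely generated, where `V^L` is the set of all extensions
    (hPic : PicFG {w : DVal L | ∃ v ∈ VK, ExtendsDV w v})
    -- `U(K, V^K)` is finitely generated
    (hU : (unitGroup VK).FG) :
    {X : Kˣ ⧸ (Units.map (Algebra.norm K : L →* K)).range |
      ∃ c : Kˣ, QuotientGroup.mk c = X ∧
        ∀ v ∈ VK, ∀ w : DVal L, UnramExtends (K := K) w v →
          (decompCard (K := K) w : ℤ) ∣ v.toFun (c : K)}.Finite := by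
  classical
  set N : Subgroup Kˣ := (Units.map (Algebra.norm K : L →* K)).range with hNdef
  have hn0 : 0 < n := hn ▸ Module.finrank_pos
  have htor : ∀ q : Kˣ ⧸ N, q ^ n = 1 := by
    intro q
    obtain ⟨x, rfl⟩ := QuotientGroup.mk'_surjective N q
    rw [← map_pow, QuotientGroup.mk'_apply, QuotientGroup.eq_one_iff]
    exact ⟨Units.map (algebraMap K L : K →* L) x,
      Units.ext (by simp [Algebra.norm_algebraMap, hn])⟩
  by_cases hLne : Nonempty (DVal L)
  case neg =>
    have hVKe : ∀ v : DVal K, v ∉ VK := fun v hv => hLne ⟨(hext v hv).choose⟩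
    have htop : unitGroup VK = ⊤ := by
      ext x
      constructor
      · intro _; trivial
      · intro _ v hv; exact absurd hv (hVKe v)
    haveI : Group.FG Kˣ := ⟨htop ▸ hU⟩
    haveI : Group.FG (Kˣ ⧸ N) := Group.fg_of_surjective (QuotientGroup.mk'_surjective N)
    haveI : Finite (Kˣ ⧸ N) := CommGroup.finite_of_fg_torsion (Kˣ ⧸ N) fun q =>
      isOfFinOrder_iff_pow_eq_one.mpr ⟨n, hn0, htor q⟩
    exact Set.toFinite _
  case pos =>
    obtain ⟨r, D, hD, hPicApp⟩ := hPic
    set VL : Set (DVal L) := {w : DVal L | ∃ v ∈ VK, ExtendsDV (K := K) w v} with hVLdef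
    letI Sv : Setoid (DVal K) := ⟨fun v v' => ∀ a : K, a ≠ 0 → v.toFun a = v'.toFun a,
      ⟨fun _ _ _ => rfl, fun h a ha => (h a ha).symm, fun h1 h2 a ha => (h1 a ha).trans (h2 a ha)⟩⟩
    let rep : DVal K → DVal K := fun v => (⟦v⟧ : Quotient Sv).out
    have hrep : ∀ v : DVal K, ∀ a : K, a ≠ 0 → (rep v).toFun a = v.toFun a := fun v =>
      Quotient.mk_out (s := Sv) v
    have hrep_congr : ∀ v v' : DVal K, (∀ a : K, a ≠ 0 → v.toFun a = v'.toFun a) →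
        rep v = rep v' := fun v v' h => congrArg Quotient.out (Quotient.sound h)
    let F : DVal K → DVal L := fun u =>
      if h : ∃ w : DVal L, UnramExtends (K := K) w u then h.choose
      else if h2 : ∃ w : DVal L, ExtendsDV (K := K) w u then h2.choose
      else Classical.choice hLne
    let wv : DVal K → DVal L := fun v => F (rep v)
    have hwv_congr : ∀ v v' : DVal K, (∀ a : K, a ≠ 0 → v.toFun a = v'.toFun a) →
        wv v = wv v' := fun v v' h => congrArg F (hrep_congr v v' h)
    have hwv_unram : ∀ v : DVal K, (∃ w : DVal L, UnramExtends (K := K) w v) →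
        UnramExtends (K := K) (wv v) v := by
      rintro v ⟨w0, hw0⟩
      have hex : ∃ w : DVal L, UnramExtends (K := K) w (rep v) :=
        ⟨w0, fun a ha => by rw [hw0 a ha]; exact (hrep v a ha).symm⟩
      have hwveq : wv v = hex.choose := dif_pos hex
      intro a ha
      rw [hwveq, hex.choose_spec a ha]
      exact hrep v a ha
    have hwv_ext : ∀ v ∈ VK, ExtendsDV (K := K) (wv v) v := by
      intro v hv
      by_cases hex : ∃ w : DVal L, UnramExtends (K := K) w (rep v)
      · have hwveq : wv v = hex.choose := dif_pos hex
        refine ⟨1, Nat.one_pos, fun a ha => ?_⟩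
        rw [hwveq, hex.choose_spec a ha, hrep v a ha]
        push_cast; ring
      · obtain ⟨w0, e0, he0, hw0⟩ := hext v hv
        have hex2 : ∃ w : DVal L, ExtendsDV (K := K) w (rep v) :=
          ⟨w0, e0, he0, fun a ha => by rw [hw0 a ha, hrep v a ha]⟩
        have hwveq : wv v = hex2.choose := by
          show dite _ _ _ = _
          rw [dif_neg hex, dif_pos hex2]
        obtain ⟨e, he, hsp⟩ := hex2.choose_spec
        exact ⟨e, he, fun a ha => by rw [hwveq, hsp a ha, hrep v a ha]⟩
    have hstab : ∀ w : DVal L,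
        (Finset.univ.filter fun τ : L ≃ₐ[K] L =>
          ∀ x : L, x ≠ 0 → w.toFun (τ x) = w.toFun x).card = decompCard (K := K) w := by
      intro w
      rw [decompCard, Nat.card_eq_fintype_card, Fintype.card_subtype]
    have hgal_self : ∀ (w : DVal L) (τ : L ≃ₐ[K] L),
        (∀ x : L, x ≠ 0 → w.toFun (τ x) = w.toFun x) → w.galComp τ = w := by
      intro w τ hτ
      apply DVal.ext'
      funext x
      by_cases hx : x = 0
      · subst hx
        show w.toFun (τ 0) = w.toFun 0
        rw [map_zero]
      · exact hτ x hx
    let t : Fin r → DVal K → ℤ := fun i v => ∑ τ : L ≃ₐ[K] L, D i ((wv v).galComp τ)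
    let p : DVal K → Prop := fun v =>
      v ∈ VK ∧ (∃ w : DVal L, UnramExtends (K := K) w v) ∧ ∀ i, t i v = 0
    let H : Subgroup Kˣ := zeroValSubgroup p
    -- the target of the logarithm map
    let Rs : Set (DVal K) := {v | v ∈ VK ∧ ¬∃ w : DVal L, UnramExtends (K := K) w v}
    haveI : Fintype ↥Rs := hram.fintype
    let Ws : Fin r → Set (DVal L) := fun i => {w | w ∈ VL ∧ D i w ≠ 0}
    haveI hWsF : ∀ i, Fintype ↥(Ws i) := fun i => (hD i).fintype
    let ιT : Type := ↥Rs ⊕ ((i : Fin r) × ↥(Ws i))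
    have halg : ∀ z : K, z ≠ 0 → algebraMap K L z ≠ 0 := fun z hz h =>
      hz ((algebraMap K L).injective (by rw [h, map_zero]))
    let fval : Kˣ → ιT → ℤ := fun x idx =>
      match idx with
      | Sum.inl vv => (vv : DVal K).toFun (x : K)
      | Sum.inr q => (q.2 : DVal L).toFun (algebraMap K L (x : K))
    have hfval_mul : ∀ x y : Kˣ, fval (x * y) = fval x + fval y := by
      intro x y
      funext idx
      rcases idx with vv | ⟨i, ww⟩
      · show (vv : DVal K).toFun ((x * y : Kˣ) : K) = _
        rw [Units.val_mul, (vv : DVal K).map_mul _ _ (Units.ne_zero x) (Units.ne_zero y)]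
        rfl
      · show (ww : DVal L).toFun (algebraMap K L ((x * y : Kˣ) : K)) = _
        rw [Units.val_mul, map_mul,
          (ww : DVal L).map_mul _ _ (halg _ (Units.ne_zero x)) (halg _ (Units.ne_zero y))]
        rfl
    let f : Additive Kˣ →+ (ιT → ℤ) :=
      AddMonoidHom.mk' (fun x => fval (Additive.toMul x)) (fun x y => hfval_mul _ _)
    have hUM : (AddSubgroup.toIntSubmodule (Subgroup.toAddSubgroup (unitGroup VK))).FG := by
      rw [Submodule.fg_iff_addSubgroup_fg, AddSubgroup.toIntSubmodule_toAddSubgroup]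
      exact (Subgroup.fg_iff_add_fg (unitGroup VK)).mp hU
    have hker : AddSubgroup.toIntSubmodule (Subgroup.toAddSubgroup H) ⊓
        LinearMap.ker f.toIntLinearMap
        = AddSubgroup.toIntSubmodule (Subgroup.toAddSubgroup (unitGroup VK)) := by
      ext x
      rw [Submodule.mem_inf]
      constructor
      · rintro ⟨hxH, hxk⟩
        have hxH' : ∀ v, p v → (v : DVal K).toFun ((Additive.toMul x : Kˣ) : K) = 0 := hxH
        have hxk' : fval (Additive.toMul x) = 0 := hxk
        show ∀ v ∈ VK, (v : DVal K).toFun ((Additive.toMul x : Kˣ) : K) = 0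
        intro v hv
        by_cases hvu : ∃ w : DVal L, UnramExtends (K := K) w v
        · by_cases hti : ∀ i, t i v = 0
          · exact hxH' v ⟨hv, hvu, hti⟩
          · push_neg at hti
            obtain ⟨i, hti⟩ := hti
            obtain ⟨τ, -, hDτ⟩ := Finset.exists_ne_zero_of_sum_ne_zero hti
            have hwvu : UnramExtends (K := K) (wv v) v := hwv_unram v hvu
            have hmem : (wv v).galComp τ ∈ Ws i := ⟨⟨v, hv, hwvu.extendsDV.galComp τ⟩, hDτ⟩
            have h0 := congrFun hxk' (Sum.inr ⟨i, ⟨(wv v).galComp τ, hmem⟩⟩)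
            have h1 : ((wv v).galComp τ).toFun (algebraMap K L ((Additive.toMul x : Kˣ) : K))
                = v.toFun ((Additive.toMul x : Kˣ) : K) := (hwvu.galComp τ) _ (Units.ne_zero _)
            rw [← h1]
            simpa using h0
        · have h0 := congrFun hxk' (Sum.inl ⟨v, hv, hvu⟩)
          simpa using h0
      · intro hxU
        have hxU' : ∀ v ∈ VK, (v : DVal K).toFun ((Additive.toMul x : Kˣ) : K) = 0 := hxU
        constructor
        · show ∀ v, p v → (v : DVal K).toFun ((Additive.toMul x : Kˣ) : K) = 0
          intro v hv
          exact hxU' v hv.1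
        · show fval (Additive.toMul x) = 0
          funext idx
          rcases idx with vv | ⟨i, ww⟩
          · show (vv : DVal K).toFun ((Additive.toMul x : Kˣ) : K) = _
            rw [hxU' vv vv.2.1]
            rfl
          · obtain ⟨⟨v1, hv1, e, he, hee⟩, -⟩ := ww.2
            show (ww : DVal L).toFun (algebraMap K L ((Additive.toMul x : Kˣ) : K)) = _
            rw [hee _ (Units.ne_zero _), hxU' v1 hv1]
            simp
    have hHfg : H.FG := by
      have hHM : (AddSubgroup.toIntSubmodule (Subgroup.toAddSubgroup H)).FG := by
        apply Submodule.fg_of_fg_map_of_fg_inf_ker f.toIntLinearMap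
        · exact IsNoetherian.noetherian _
        · rw [hker]; exact hUM
      rw [Submodule.fg_iff_addSubgroup_fg, AddSubgroup.toIntSubmodule_toAddSubgroup] at hHM
      exact (Subgroup.fg_iff_add_fg H).mpr hHM
    let π := QuotientGroup.mk' N
    let P : Subgroup (Kˣ ⧸ N) := H.map π
    haveI : Group.FG ↥H := (Group.fg_iff_subgroup_fg H).mpr hHfg
    haveI : Group.FG ↥P := Group.fg_of_surjective (π.subgroupMap_surjective H)
    haveI : Finite ↥P := by
      apply CommGroup.finite_of_fg_torsion
      intro q
      refine isOfFinOrder_iff_pow_eq_one.mpr ⟨n, hn0, ?_⟩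
      ext
      push_cast
      exact htor _
    refine Set.Finite.subset (Set.toFinite (P : Set (Kˣ ⧸ N))) ?_
    rintro X ⟨c, rfl, hc⟩
    -- construct the divisor attached to `c`
    let d : DVal L → ℤ := fun w =>
      if h : ∃ v', v' ∈ VK ∧ UnramExtends (K := K) w v' ∧ w = wv v'
      then h.choose.toFun (c : K) / (decompCard (K := K) w : ℤ) else 0
    have hd_spec : ∀ (w : DVal L) (v' : DVal K), v' ∈ VK → UnramExtends (K := K) w v' →
        w = wv v' → d w = v'.toFun (c : K) / (decompCard (K := K) w : ℤ) := by
      intro w v' h1 h2 h3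
      have hex : ∃ v'', v'' ∈ VK ∧ UnramExtends (K := K) w v'' ∧ w = wv v'' := ⟨v', h1, h2, h3⟩
      have hdw : d w = hex.choose.toFun (c : K) / (decompCard (K := K) w : ℤ) := dif_pos hex
      rw [hdw]
      obtain ⟨hm, hu, he⟩ := hex.choose_spec
      congr 1
      exact (hu _ (Units.ne_zero c)).symm.trans (h2 _ (Units.ne_zero c))
    have hd_zero : ∀ w : DVal L,
        (¬ ∃ v', v' ∈ VK ∧ UnramExtends (K := K) w v' ∧ w = wv v') → d w = 0 :=
      fun w h => dif_neg h
    have hddiv : IsDivisor VL d := by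
      apply Set.Finite.subset ((hA (c : K) (Units.ne_zero c)).image wv)
      rintro w ⟨-, hw⟩
      by_cases hex : ∃ v', v' ∈ VK ∧ UnramExtends (K := K) w v' ∧ w = wv v'
      · obtain ⟨hm, hu, he⟩ := hex.choose_spec
        refine ⟨hex.choose, ⟨hm, ?_⟩, he.symm⟩
        intro h0
        apply hw
        have hdw : d w = hex.choose.toFun (c : K) / (decompCard (K := K) w : ℤ) := dif_pos hex
        rw [hdw, h0, Int.zero_ediv]
      · exact absurd (hd_zero w hex) hw
    obtain ⟨ni, a, ha, hsum⟩ := hPicApp d hddiv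
    set Na : K := Algebra.norm K a with hNadef
    have halgNa : algebraMap K L Na = ∏ τ : L ≃ₐ[K] L, τ a := Algebra.norm_eq_prod_automorphisms (K := K) a
    have hNa0 : Na ≠ 0 := by
      intro h0
      have h1 : (0 : L) = ∏ τ : L ≃ₐ[K] L, τ a := by rw [← halgNa, h0, map_zero]
      have hprod : (∏ τ : L ≃ₐ[K] L, τ a) ≠ 0 :=
        Finset.prod_ne_zero_iff.mpr fun τ _ h => ha (by simpa using congrArg τ.symm h)
      exact hprod h1.symm
    have hval : ∀ v, v ∈ VK → (∃ w : DVal L, UnramExtends (K := K) w v) →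
        v.toFun (c : K) - v.toFun Na = ∑ i, ni i * t i v := by
      intro v hv hvu
      have hwvu : UnramExtends (K := K) (wv v) v := hwv_unram v hvu
      have hcm : ∀ τ : L ≃ₐ[K] L, (wv v).galComp τ ∈ VL :=
        fun τ => ⟨v, hv, hwvu.extendsDV.galComp τ⟩
      have h1 : v.toFun Na = ∑ τ : L ≃ₐ[K] L, ((wv v).galComp τ).toFun a := by
        rw [← hwvu Na hNa0, halgNa,
          (wv v).map_prod' Finset.univ (fun τ : L ≃ₐ[K] L => τ a)
            (fun τ _ h => ha (by simpa using congrArg τ.symm h))]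
        rfl
      have h2 : ∀ τ : L ≃ₐ[K] L, ((wv v).galComp τ).toFun a
          = d ((wv v).galComp τ) - ∑ i, ni i * D i ((wv v).galComp τ) := by
        intro τ
        have hh := hsum ((wv v).galComp τ) (hcm τ)
        omega
      have h3 : ∑ τ : L ≃ₐ[K] L, d ((wv v).galComp τ) = v.toFun (c : K) := by
        have hmdvd : (decompCard (K := K) (wv v) : ℤ) ∣ v.toFun (c : K) := hc v hv (wv v) hwvu
        rw [← Finset.sum_filter_add_sum_filter_not Finset.univ
          (fun τ : L ≃ₐ[K] L => ∀ x : L, x ≠ 0 → (wv v).toFun (τ x) = (wv v).toFun x)]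
        have e1 : ∀ τ ∈ Finset.univ.filter
            (fun τ : L ≃ₐ[K] L => ∀ x : L, x ≠ 0 → (wv v).toFun (τ x) = (wv v).toFun x),
            d ((wv v).galComp τ) = v.toFun (c : K) / (decompCard (K := K) (wv v) : ℤ) := by
          intro τ hτ
          rw [hgal_self (wv v) τ (Finset.mem_filter.mp hτ).2]
          exact hd_spec (wv v) v hv hwvu rfl
        have e2 : ∀ τ ∈ Finset.univ.filter
            (fun τ : L ≃ₐ[K] L => ¬ ∀ x : L, x ≠ 0 → (wv v).toFun (τ x) = (wv v).toFun x),
            d ((wv v).galComp τ) = 0 := by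
          intro τ hτ
          apply hd_zero
          rintro ⟨v', hv', hu', he'⟩
          have hcu : UnramExtends (K := K) ((wv v).galComp τ) v := hwvu.galComp τ
          have hvv' : ∀ b : K, b ≠ 0 → v.toFun b = v'.toFun b := fun b hb => by
            rw [← hcu b hb, hu' b hb]
          have hwe : wv v = wv v' := hwv_congr v v' hvv'
          have hgc : (wv v).galComp τ = wv v := by rw [he', ← hwe]
          refine (Finset.mem_filter.mp hτ).2 fun x hx => ?_
          rw [← galComp_toFun (wv v) τ x, hgc]
        rw [Finset.sum_congr rfl e1, Finset.sum_congr rfl e2, Finset.sum_const,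
          Finset.sum_const_zero, add_zero, hstab (wv v), nsmul_eq_mul]
        exact Int.mul_ediv_cancel' hmdvd
      have h4 : v.toFun Na = v.toFun (c : K) - ∑ i, ni i * t i v := by
        rw [h1, Finset.sum_congr rfl fun τ _ => h2 τ, Finset.sum_sub_distrib, h3,
          Finset.sum_comm]
        congr 1
        refine Finset.sum_congr rfl fun i _ => ?_
        rw [← Finset.mul_sum]
      omega
    have hau : Units.mk0 Na hNa0 ∈ N := by
      refine ⟨Units.mk0 a ha, ?_⟩
      ext
      simp [hNadef]
    set b : Kˣ := c * (Units.mk0 Na hNa0)⁻¹ with hbdef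
    have hvb : ∀ v : DVal K, v.toFun (b : K) = v.toFun (c : K) - v.toFun Na := by
      intro v
      have hbv : (b : K) = (c : K) * Na⁻¹ := by
        rw [hbdef, Units.val_mul]
        congr 1
      rw [hbv, v.map_mul _ _ (Units.ne_zero c) (inv_ne_zero hNa0), v.map_inv' Na hNa0]
      ring
    have hbH : b ∈ H := by
      show ∀ v, p v → (v : DVal K).toFun (b : K) = 0
      rintro v ⟨hv, hvu, hti⟩
      rw [hvb v]
      have := hval v hv hvu
      simp only [hti, mul_zero, Finset.sum_const_zero] at this
      omega
    show QuotientGroup.mk c ∈ (P : Set (Kˣ ⧸ N))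
    rw [SetLike.mem_coe]
    refine Subgroup.mem_map.mpr ⟨b, hbH, ?_⟩
    show (b : Kˣ ⧸ N) = QuotientGroup.mk c
    rw [QuotientGroup.eq]
    have hbc : b⁻¹ * c = Units.mk0 Na hNa0 := by
      rw [hbdef]
      group
    rw [hbc]
    exact hau
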